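/- Let Q be any consensus protocol that dominates the protocol P_0 (which decides 0 as soon as K_i∃0 holds and otherwise decides 1 at time t+1). Then in Q, each process i performs decide_i(0) exactly at the first time at which K_i∃0 holds. -/

import Mathlib

attribute [local instance] Classical.propDecidable

/-- An adversary in the synchronous crash-failure model: an input vector of binary
initial values, a failure pattern given by the delivery relation `F` (`F m j i` means
the message sent by `j` at time `m` is delivered to `i` at time `m+1`, i.e. in round `m+1`),
and a crash round for each process (`⊤` meaning the process never crashes).
A process behaves correctly before its crashing round and sends nothing afterwards;
during its crashing round it may send to an arbitrary subset. -/
structure Adversary (n : ℕ) where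
  init : Fin n → Bool
  F : ℕ → Fin n → Fin n → Prop
  crash : Fin n → ℕ∞
  crash_pos : ∀ j, 1 ≤ crash j
  before_crash : ∀ (m : ℕ) (j i : Fin n), ((m + 1 : ℕ) : ℕ∞) < crash j → F m j i
  after_crash : ∀ (m : ℕ) (j i : Fin n), crash j < ((m + 1 : ℕ) : ℕ∞) → ¬ F m j i

namespace Adversary

variable {n : ℕ}

/-- A process is faulty if it crashes at some point. -/
def Faulty (A : Adversary n) (j : Fin n) : Prop := A.crash j ≠ ⊤

/-- The number `f` of actual failures in the run determined by the adversary. -/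
noncomputable def numFaults (A : Adversary n) : ℕ := {j | A.Faulty j}.ncard

/-- A process is active at time `m` if it has not crashed before time `m`. -/
def Active (A : Adversary n) (j : Fin n) (m : ℕ) : Prop := ((m : ℕ) : ℕ∞) < A.crash j

end Adversary

/-- `Seen A ⟨j,ℓ⟩ ⟨i,m⟩`: node `⟨j,ℓ⟩` is in the view (communication graph) of node
`⟨i,m⟩`, i.e. there is a message chain from `⟨j,ℓ⟩` to `⟨i,m⟩`. -/
inductive Seen {n : ℕ} (A : Adversary n) : Fin n × ℕ → Fin n × ℕ → Prop
  | refl (p : Fin n × ℕ) : Seen A p p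
  | self {p : Fin n × ℕ} {i : Fin n} {m : ℕ} : Seen A p (i, m) → Seen A p (i, m + 1)
  | step {p : Fin n × ℕ} {j i : Fin n} {m : ℕ} : Seen A p (j, m) → A.F m j i →
      Seen A p (i, m + 1)

open Adversary

/-- Two adversaries give process `i` the same view at time `m` in a full-information
protocol: the same nodes are seen, with the same initial values at seen time-0 nodes
and the same incoming edges at seen later nodes. -/
def sameView {n : ℕ} (A B : Adversary n) (i : Fin n) (m : ℕ) : Prop :=
  (∀ p, Seen A p (i, m) ↔ Seen B p (i, m)) ∧
  (∀ j, Seen A (j, 0) (i, m) → A.init j = B.init j) ∧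
  (∀ (k : ℕ) (j j' : Fin n), Seen A (j', k + 1) (i, m) → (A.F k j j' ↔ B.F k j j'))

/-- The local state of (active) process `i` at time `m` is the same under both
adversaries: `i` is active in both and has the same full-information view. -/
def sameLocal {n : ℕ} (A B : Adversary n) (i : Fin n) (m : ℕ) : Prop :=
  A.Active i m ∧ B.Active i m ∧ sameView A B i m

/-- The runs of the system are those generated by adversaries with at most `t` crashes. -/
def Valid {n : ℕ} (t : ℕ) (A : Adversary n) : Prop := A.numFaults ≤ t

/-- Knowledge in the full-information protocol: `i` knows the fact `φ` at time `m`
iff `φ` holds at time `m` in every run (with at most `t` failures) in which `i` has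
the same local state. -/
def Knows {n : ℕ} (t : ℕ) (φ : Adversary n → ℕ → Prop) (A : Adversary n) (i : Fin n)
    (m : ℕ) : Prop :=
  ∀ B : Adversary n, Valid t B → sameLocal A B i m → φ B m

/-- The fact `∃v`: some process has initial value `v`. -/
def existsVal {n : ℕ} (v : Bool) : Adversary n → ℕ → Prop := fun A _ => ∃ j, A.init j = v

/-- Node `⟨j',m'⟩` is revealed to `⟨i,m⟩`: either it is seen by `⟨i,m⟩`, or for some
seen node `⟨i',m'⟩` the edge `(⟨j',m'-1⟩,⟨i',m'⟩)` is absent from `i`'s view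
(proving that `j'` crashed before time `m'`). -/
def RevealedNode {n : ℕ} (A : Adversary n) (j' : Fin n) (m' : ℕ) (i : Fin n) (m : ℕ) :
    Prop :=
  Seen A (j', m') (i, m) ∨
  ∃ (i' : Fin n) (k : ℕ), m' = k + 1 ∧ Seen A (i', k + 1) (i, m) ∧ ¬ A.F k j' i'

/-- Time `k` is revealed to `⟨i,m⟩` if every node `⟨j',k⟩` is revealed to `⟨i,m⟩`. -/
def RevealedTime {n : ℕ} (A : Adversary n) (k : ℕ) (i : Fin n) (m : ℕ) : Prop :=
  ∀ j', RevealedNode A j' k i m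

/-- A hidden path w.r.t. `⟨i,m⟩`: for each `k ≤ m` a node `⟨j_k,k⟩` not revealed to `⟨i,m⟩`. -/
def HiddenPath {n : ℕ} (A : Adversary n) (i : Fin n) (m : ℕ) : Prop :=
  ∃ js : ℕ → Fin n, ∀ k ≤ m, ¬ RevealedNode A (js k) k i m

/-- `not-known(∃0)`: no process active at time `m` knows `∃0`. -/
def notKnown0 {n : ℕ} (t : ℕ) : Adversary n → ℕ → Prop :=
  fun A m => ∀ j, A.Active j m → ¬ Knows t (existsVal false) A j m

/-- A (full-information, deterministic) decision protocol, described by the decision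
status function: `P A i m = some v` iff by time `m` process `i` has decided `v`
in the run determined by adversary `A`. -/
abbrev ProtoDec (n : ℕ) : Type := Adversary n → Fin n → ℕ → Option Bool

/-- Sanity conditions making a decision-status function a protocol: decisions are
irrevocable, and (for active processes) depend only on the local state. -/
def IsProtocol {n : ℕ} (t : ℕ) (P : ProtoDec n) : Prop :=
  (∀ A i m v, P A i m = some v → P A i (m + 1) = some v) ∧
  (∀ A B i m, Valid t A → Valid t B → sameLocal A B i m → P A i m = P B i m)

/-- Process `i` performs the action `decide(v)` at time `m`: it is decided on `v`
at `m` and was undecided before. -/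
def DecidesAt {n : ℕ} (P : ProtoDec n) (A : Adversary n) (i : Fin n) (m : ℕ) (v : Bool) :
    Prop :=
  P A i m = some v ∧ ∀ k < m, P A i k = none

/-- Decision: every correct process eventually decides. -/
def Decision {n : ℕ} (t : ℕ) (P : ProtoDec n) : Prop :=
  ∀ A : Adversary n, Valid t A → ∀ i, ¬ A.Faulty i → ∃ m, P A i m ≠ none

/-- Validity: if all initial values are `v` then correct processes decide `v`. -/
def Validity {n : ℕ} (t : ℕ) (P : ProtoDec n) : Prop :=
  ∀ A : Adversary n, Valid t A → ∀ v : Bool, (∀ j, A.init j = v) →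
    ∀ i m w, ¬ A.Faulty i → P A i m = some w → w = v

/-- Agreement: all correct processes decide on the same value. -/
def Agreement {n : ℕ} (t : ℕ) (P : ProtoDec n) : Prop :=
  ∀ A : Adversary n, Valid t A → ∀ i j m m' v w, ¬ A.Faulty i → ¬ A.Faulty j →
    P A i m = some v → P A j m' = some w → v = w

def ConsensusSolves {n : ℕ} (t : ℕ) (P : ProtoDec n) : Prop :=
  Decision t P ∧ Validity t P ∧ Agreement t P

/-- Uniform Agreement: all processes that decide (faulty or not) decide the same value. -/
def UniformAgreement {n : ℕ} (t : ℕ) (P : ProtoDec n) : Prop :=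
  ∀ A : Adversary n, Valid t A → ∀ i j m m' v w,
    P A i m = some v → P A j m' = some w → v = w

def UniformConsensusSolves {n : ℕ} (t : ℕ) (P : ProtoDec n) : Prop :=
  Decision t P ∧ Validity t P ∧ UniformAgreement t P

/-- `Q` dominates `P`: for every adversary and process, if `i` has decided by time `m`
in `P` then `i` has decided by time `m` in `Q`. -/
def Dominates {n : ℕ} (t : ℕ) (Q P : ProtoDec n) : Prop :=
  ∀ A : Adversary n, Valid t A → ∀ i m, P A i m ≠ none → Q A i m ≠ none

def StrictlyDominates {n : ℕ} (t : ℕ) (Q P : ProtoDec n) : Prop :=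
  Dominates t Q P ∧ ¬ Dominates t P Q

/-- Turn a per-time decision rule into a decision-status function (the first decision
taken is kept forever). -/
def runDec (step : ℕ → Option Bool) : ℕ → Option Bool
  | 0 => step 0
  | m + 1 => (runDec step m).elim (step (m + 1)) some

/-- The protocol `P₀`: decide 0 as soon as `K_i ∃0` holds, otherwise decide 1 at time `t+1`. -/
noncomputable def P0 (n t : ℕ) : ProtoDec n := fun A i =>
  runDec fun m =>
    if Knows t (existsVal false) A i m then some false
    else if m = t + 1 then some true
    else none

/-- The unbeatable protocol `Opt₀`: decide 0 as soon as `K_i ∃0` holds, and decide 1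
as soon as `K_i not-known(∃0)` holds. -/
noncomputable def Opt0 (n t : ℕ) : ProtoDec n := fun A i =>
  runDec fun m =>
    if Knows t (existsVal false) A i m then some false
    else if Knows t (notKnown0 t) A i m then some true
    else none

/-- The number of processes with initial value `false` (0). -/
noncomputable def zeros {n : ℕ} (A : Adversary n) : ℕ :=
  (Finset.univ.filter fun j => A.init j = false).card

/-- The number of processes with initial value `true` (1). -/
noncomputable def ones {n : ℕ} (A : Adversary n) : ℕ :=
  (Finset.univ.filter fun j => A.init j = true).card

/-- The fact `Maj = 0`: at least `n/2` initial values are 0. -/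
def Maj0 (n : ℕ) : Adversary n → ℕ → Prop := fun A _ => n ≤ 2 * zeros A

/-- The fact `Maj = 1`: strictly more than `n/2` initial values are 1. -/
def Maj1 (n : ℕ) : Adversary n → ℕ → Prop := fun A _ => n < 2 * ones A

noncomputable def seenZeros {n : ℕ} (A : Adversary n) (i : Fin n) (m : ℕ) : ℕ :=
  (Finset.univ.filter fun j => Seen A (j, 0) (i, m) ∧ A.init j = false).card

noncomputable def seenOnes {n : ℕ} (A : Adversary n) (i : Fin n) (m : ℕ) : ℕ :=
  (Finset.univ.filter fun j => Seen A (j, 0) (i, m) ∧ A.init j = true).card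

/-- `Maj(vals(i,m))`: 0 if at least half of the initial values known to `i` at `m`
are 0, and 1 otherwise. -/
noncomputable def MajSeen {n : ℕ} (A : Adversary n) (i : Fin n) (m : ℕ) : Bool :=
  if seenOnes A i m ≤ seenZeros A i m then false else true

/-- The unbeatable majority consensus protocol `Opt_Maj`. -/
noncomputable def OptMaj (n t : ℕ) : ProtoDec n := fun A i =>
  runDec fun m =>
    if Knows t (Maj0 n) A i m then some false
    else if Knows t (Maj1 n) A i m then some true
    else if ∃ k ≤ m, RevealedTime A k i m then some (MajSeen A i m)
    else none

/-- The fact `∀1`: all initial values are 1. -/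
def all1 (n : ℕ) : Adversary n → ℕ → Prop := fun A _ => ∀ j, A.init j = true

/-- The sender set of `i` repeats at `⟨i,m⟩`: `i` hears from the same set of processes
in rounds `m-1` and `m` (only meaningful for `m ≥ 2`). -/
def senderSetRepeats {n : ℕ} (A : Adversary n) (i : Fin n) (m : ℕ) : Prop :=
  ∀ j, (A.F (m - 2) j i ↔ A.F (m - 1) j i)

/-- The protocol `P0_opt` of Halpern, Moses and Waarts. -/
noncomputable def P0opt (n t : ℕ) : ProtoDec n := fun A i =>
  runDec fun m =>
    if Knows t (existsVal false) A i m then some false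
    else if Knows t (all1 n) A i m ∨ (2 ≤ m ∧ senderSetRepeats A i m) then some true
    else none

/-- The fact `∃correct(v)`: some correct (never-failing) process knows `∃v`. -/
def ExistsCorrectKnows {n : ℕ} (t : ℕ) (v : Bool) : Adversary n → ℕ → Prop :=
  fun A m => ∃ j, ¬ A.Faulty j ∧ Knows t (existsVal v) A j m

/-- The number `d` of failures process `i` knows of at time `m`: the number of
processes `j ≠ i` from which `i` receives no message in round `m`. -/
noncomputable def knownFaults {n : ℕ} (A : Adversary n) (i : Fin n) : ℕ → ℕ
  | 0 => 0
  | m + 1 => (Finset.univ.filter fun j => j ≠ i ∧ ¬ A.F m j i).card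

/-- The protocol `u-P₀` for uniform consensus: decide 0 as soon as
`K_i ∃correct(0)` holds, otherwise decide 1 at time `t+1`. -/
noncomputable def uP0 (n t : ℕ) : ProtoDec n := fun A i =>
  runDec fun m =>
    if Knows t (ExistsCorrectKnows t false) A i m then some false
    else if m = t + 1 then some true
    else none

/-- The unbeatable uniform consensus protocol `u-Opt₀`. -/
noncomputable def uOpt0 (n t : ℕ) : ProtoDec n := fun A i =>
  runDec fun m =>
    if Knows t (ExistsCorrectKnows t false) A i m then some false
    else if ¬ Knows t (existsVal false) A i m ∧ ∃ k ≤ m, RevealedTime A k i m then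
      some true
    else none

/-- All decisions in the run `P[A]` are taken at or before time `m`. -/
def AllDecidedBy {n : ℕ} (P : ProtoDec n) (A : Adversary n) (m : ℕ) : Prop :=
  ∀ i k, P A i k ≠ none → P A i m ≠ none

/-- `Q` last-decider dominates `P`. -/
def LDDominates {n : ℕ} (t : ℕ) (Q P : ProtoDec n) : Prop :=
  ∀ A : Adversary n, Valid t A → ∀ m, AllDecidedBy P A m → AllDecidedBy Q A m

/-- A 0-chain for `⟨i,m⟩`: distinct processes `j₀,…,j_d = i` with `d ≤ m`, `j₀` having
initial value 0, and `j_k` receiving a message from `j_{k-1}` at time `k` (round `k`). -/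
def ZeroChain {n : ℕ} (A : Adversary n) (i : Fin n) (m : ℕ) : Prop :=
  ∃ d ≤ m, ∃ js : ℕ → Fin n, js d = i ∧
    (∀ k ≤ d, ∀ l ≤ d, js k = js l → k = l) ∧
    A.init (js 0) = false ∧
    ∀ k, 1 ≤ k → k ≤ d → A.F (k - 1) (js (k - 1)) (js k)

/-! If `i` knows `∃0` at time `m`, then `Q` decides 0 at `m`: domination of `P₀` forces a
decision, and deciding 1 is impossible. For `m > 0`, the zero that `i` knows of reached it
through a node `⟨j, m-1⟩` with `j = i` or with a message `j → i` in round `m`. Making `i` and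
`j` correct leaves `i`'s view at `m` unchanged, and in that run `j` knows `∃0` at `m-1`, hence
has decided 0 by induction, so Agreement excludes 1 for `i`. Knowledge of preconditions
(deciding 0 requires `K_i∃0`) and irrevocability then pin the decision to the first time at
which `K_i∃0` holds. -/

variable {n : ℕ}

namespace Seen

variable {A : Adversary n}

theorem eq_or_snd_lt {p q : Fin n × ℕ} (h : Seen A p q) : p = q ∨ p.2 < q.2 := by
  induction h with
  | refl => exact Or.inl rfl
  | self _ ih | step _ _ ih =>
    refine Or.inr ?_
    rcases ih with rfl | hlt
    · exact Nat.lt_succ_self _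
    · exact Nat.lt_succ_of_lt hlt

theorem snd_le {p q : Fin n × ℕ} (h : Seen A p q) : p.2 ≤ q.2 := by
  rcases h.eq_or_snd_lt with rfl | hlt
  exacts [le_rfl, hlt.le]

theorem fst_eq_of_snd_eq {p q : Fin n × ℕ} (h : Seen A p q) (he : p.2 = q.2) : p.1 = q.1 := by
  rcases h.eq_or_snd_lt with rfl | hlt
  exacts [rfl, absurd he hlt.ne]

theorem trans {p q r : Fin n × ℕ} (h₁ : Seen A p q) (h₂ : Seen A q r) : Seen A p r := by
  induction h₂ with
  | refl => exact h₁
  | self _ ih => exact ih.self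
  | step _ hF ih => exact ih.step hF

theorem mono {B : Adversary n} (hF : ∀ l j x, A.F l j x → B.F l j x) {p q : Fin n × ℕ}
    (h : Seen A p q) : Seen B p q := by
  induction h with
  | refl => exact .refl _
  | self _ ih => exact ih.self
  | step _ hAF ih => exact ih.step (hF _ _ _ hAF)

theorem exists_pred {p : Fin n × ℕ} {i : Fin n} {m : ℕ} (h : Seen A p (i, m + 1))
    (hp : p.2 ≤ m) : ∃ j, Seen A p (j, m) ∧ (j = i ∨ A.F m j i) := by
  cases h with
  | refl => simp at hp
  | self h => exact ⟨i, h, Or.inl rfl⟩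
  | step h hF => exact ⟨_, h, Or.inr hF⟩

end Seen

theorem Adversary.Active.mono {A : Adversary n} {i : Fin n} {k m : ℕ} (h : A.Active i m)
    (hk : k ≤ m) : A.Active i k :=
  lt_of_le_of_lt (by exact_mod_cast hk) h

def DeliversToView (A : Adversary n) (j i : Fin n) (m : ℕ) : Prop :=
  ∀ l x, Seen A (x, l + 1) (i, m) → A.F l j x

theorem deliversToView_of_active {A : Adversary n} {j : Fin n} {m : ℕ} (hj : A.Active j m)
    (i : Fin n) : DeliversToView A j i m := fun l _ hx =>
  A.before_crash l _ _ (lt_of_le_of_lt (by exact_mod_cast hx.snd_le) hj)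

theorem deliversToView_of_F {A : Adversary n} {j i : Fin n} {m : ℕ} (hF : A.F m j i) :
    DeliversToView A j i (m + 1) := by
  intro l x hx
  rcases Nat.lt_or_eq_of_le (Nat.le_of_succ_le_succ hx.snd_le) with hl | rfl
  · have hcrash : ((m + 1 : ℕ) : ℕ∞) ≤ A.crash j :=
      not_lt.1 fun hc => A.after_crash m j i hc hF
    exact A.before_crash l j x (lt_of_lt_of_le (by exact_mod_cast Nat.succ_lt_succ hl) hcrash)
  · obtain rfl : x = i := hx.fst_eq_of_snd_eq rfl
    exact hF

namespace Adversary

noncomputable def makeCorrect (A : Adversary n) (S : Fin n → Prop) : Adversary n where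
  init := A.init
  F l j x := S j ∨ A.F l j x
  crash j := if S j then ⊤ else A.crash j
  crash_pos j := by
    by_cases hS : S j
    · simp [hS]
    · simpa [hS] using A.crash_pos j
  before_crash m j i h := by
    by_cases hS : S j
    · exact Or.inl hS
    · simp only [if_neg hS] at h
      exact Or.inr (A.before_crash m j i h)
  after_crash m j i h := by
    by_cases hS : S j
    · simp [hS] at h
    · simp only [if_neg hS] at h
      simpa [hS] using A.after_crash m j i h

variable {A : Adversary n} {S : Fin n → Prop}

theorem makeCorrect_not_faulty {j : Fin n} (hS : S j) : ¬ (A.makeCorrect S).Faulty j := by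
  simp [Faulty, makeCorrect, hS]

theorem makeCorrect_active {j : Fin n} (hS : S j) (l : ℕ) : (A.makeCorrect S).Active j l := by
  simp [Active, makeCorrect, hS]

theorem makeCorrect_valid {t : ℕ} (hA : Valid t A) : Valid t (A.makeCorrect S) := by
  refine le_trans (Set.ncard_le_ncard (fun j hj => ?_) (Set.toFinite _)) hA
  by_cases hS : S j
  · exact absurd hj (makeCorrect_not_faulty hS)
  · simpa [Faulty, makeCorrect, hS] using hj

theorem seen_makeCorrect {p q : Fin n × ℕ} (h : Seen A p q) : Seen (A.makeCorrect S) p q :=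
  h.mono fun _ _ _ hF => Or.inr hF

theorem makeCorrect_F_iff_of_delivers {i j x : Fin n} {l m : ℕ}
    (hS : ∀ j, S j → DeliversToView A j i m) (hx : Seen A (x, l + 1) (i, m)) :
    (A.makeCorrect S).F l j x ↔ A.F l j x :=
  ⟨fun h => h.elim (fun hj => hS j hj l x hx) id, Or.inr⟩

theorem seen_of_seen_makeCorrect {i : Fin n} {m : ℕ} (hS : ∀ j, S j → DeliversToView A j i m)
    {p q : Fin n × ℕ} (h : Seen (A.makeCorrect S) p q) (hq : Seen A q (i, m)) : Seen A p q := by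
  induction h with
  | refl => exact .refl _
  | self _ ih => exact (ih ((Seen.refl _).self.trans hq)).self
  | step _ hF ih =>
    have hAF := (makeCorrect_F_iff_of_delivers hS hq).1 hF
    exact (ih (((Seen.refl _).step hAF).trans hq)).step hAF

theorem sameLocal_makeCorrect {i : Fin n} {m : ℕ} (hi : A.Active i m)
    (hS : ∀ j, S j → DeliversToView A j i m) :
    sameLocal A (A.makeCorrect S) i m :=
  ⟨hi, lt_of_lt_of_le hi (by by_cases h : S i <;> simp [makeCorrect, h]),
    fun _ => ⟨seen_makeCorrect, fun h => seen_of_seen_makeCorrect hS h (.refl _)⟩,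
    fun _ _ => rfl, fun _ _ _ hx => (makeCorrect_F_iff_of_delivers hS hx).symm⟩

end Adversary

theorem knows_existsVal_of_seen {t : ℕ} {A : Adversary n} {i j : Fin n} {m : ℕ} {v : Bool}
    (hj : Seen A (j, 0) (i, m)) (hv : A.init j = v) : Knows t (existsVal v) A i m :=
  fun _ _ hloc => ⟨j, hloc.2.2.2.1 j hj ▸ hv⟩

theorem exists_seen_of_knows_existsVal {t : ℕ} {A : Adversary n} {i : Fin n} {m : ℕ}
    {v : Bool} (hA : Valid t A) (hi : A.Active i m) (hK : Knows t (existsVal v) A i m) :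
    ∃ j, Seen A (j, 0) (i, m) ∧ A.init j = v := by
  by_contra! hno
  -- Unseen initial values are set to `!v`; `i` cannot tell the difference.
  let B : Adversary n :=
    { A with init := fun j => if Seen A (j, 0) (i, m) then A.init j else !v }
  have hloc : sameLocal A B i m :=
    ⟨hi, hi, fun _ => ⟨Seen.mono (A := A) (B := B) fun _ _ _ => id,
      Seen.mono (A := B) (B := A) fun _ _ _ => id⟩,
      fun j hj => by simp [B, hj], fun _ _ _ _ => Iff.rfl⟩
  obtain ⟨j, hj⟩ := hK B hA hloc
  by_cases hs : Seen A (j, 0) (i, m)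
  · exact hno j hs (by simpa [B, hs] using hj)
  · simp [B, hs] at hj

section Protocol

variable {t : ℕ} {Q : ProtoDec n}

theorem IsProtocol.decided_of_le (hQ : IsProtocol t Q) {A : Adversary n} {i : Fin n}
    {k m : ℕ} {v : Bool} (hk : Q A i k = some v) (hkm : k ≤ m) : Q A i m = some v := by
  induction m, hkm using Nat.le_induction with
  | base => exact hk
  | succ m _ ih => exact hQ.1 A i m v ih

theorem knows_existsVal_of_decided (hQ : IsProtocol t Q) (hV : Validity t Q)
    {A : Adversary n} (hA : Valid t A) {i : Fin n} {m : ℕ} {v : Bool}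
    (hd : Q A i m = some v) : Knows t (existsVal v) A i m := by
  intro B hB hAB
  by_contra hno
  -- In `B` all values are `!v`; making the processes active at `m` correct keeps `i`'s
  -- view, and then Validity forbids the decision `v`.
  let C := B.makeCorrect (B.Active · m)
  have hC : Valid t C := makeCorrect_valid hB
  have hBC : sameLocal B C i m :=
    sameLocal_makeCorrect hAB.2.1 fun _ hj => deliversToView_of_active hj i
  have hdC : Q C i m = some v := by rw [← hQ.2 B C i m hB hC hBC, ← hQ.2 A B i m hA hB hAB, hd]
  have hall : ∀ j, C.init j = !v := fun j => Bool.eq_not.2 fun h => hno ⟨j, h⟩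
  simpa using hV C hC (!v) hall i m v (makeCorrect_not_faulty hAB.2.1) hdC

theorem runDec_ne_none {step : ℕ → Option Bool} {m : ℕ} (h : step m ≠ none) :
    runDec step m ≠ none := by
  cases m with
  | zero => exact h
  | succ m => cases hr : runDec step m <;> simp [runDec, hr, h]

theorem P0_ne_none_of_knows {A : Adversary n} {i : Fin n} {m : ℕ}
    (hK : Knows t (existsVal false) A i m) : P0 n t A i m ≠ none :=
  runDec_ne_none (by simp [hK])

theorem decided_false_of_ne_true (hdom : Dominates t Q (P0 n t)) {A : Adversary n}
    (hA : Valid t A) {i : Fin n} {m : ℕ} (hK : Knows t (existsVal false) A i m)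
    (hne : Q A i m ≠ some true) : Q A i m = some false := by
  match hd : Q A i m with
  | none => exact absurd hd (hdom A hA i m (P0_ne_none_of_knows hK))
  | some false => rfl
  | some true => exact absurd hd hne

theorem decided_false_of_knows_existsVal_false (hQ : IsProtocol t Q) (hC : ConsensusSolves t Q)
    (hdom : Dominates t Q (P0 n t)) (m : ℕ) {A : Adversary n} (hA : Valid t A) {i : Fin n}
    (hi : A.Active i m) (hK : Knows t (existsVal false) A i m) : Q A i m = some false := by
  induction m generalizing A i with
  | zero =>
    refine decided_false_of_ne_true hdom hA hK fun hd => ?_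
    obtain ⟨j₀, hj₀, hj₀v⟩ := exists_seen_of_knows_existsVal hA hi hK
    obtain ⟨j₁, hj₁, hj₁v⟩ := exists_seen_of_knows_existsVal hA hi
      (knows_existsVal_of_decided hQ hC.2.1 hA hd)
    obtain rfl : j₀ = i := hj₀.fst_eq_of_snd_eq rfl
    obtain rfl : j₁ = j₀ := hj₁.fst_eq_of_snd_eq rfl
    simp [hj₀v] at hj₁v
  | succ m ih =>
    refine decided_false_of_ne_true hdom hA hK fun hd => ?_
    obtain ⟨j₀, hj₀, hj₀v⟩ := exists_seen_of_knows_existsVal hA hi hK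
    obtain ⟨j, hj₀j, hji⟩ := hj₀.exists_pred (Nat.zero_le m)
    let B := A.makeCorrect (fun x => x = i ∨ x = j)
    have hB : Valid t B := makeCorrect_valid hA
    have hAB : sameLocal A B i (m + 1) := by
      refine sameLocal_makeCorrect hi ?_
      rintro x (rfl | rfl)
      · exact deliversToView_of_active hi x
      · rcases hji with rfl | hF
        exacts [deliversToView_of_active hi x, deliversToView_of_F hF]
    have hjB : Q B j m = some false :=
      ih hB (makeCorrect_active (Or.inr rfl) m)
        (knows_existsVal_of_seen (seen_makeCorrect hj₀j) hj₀v)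
    have hiB : Q B i (m + 1) = some true := by rw [← hQ.2 A B i _ hA hB hAB, hd]
    simpa using hC.2.2 B hB i j _ _ _ _ (makeCorrect_not_faulty (Or.inl rfl))
      (makeCorrect_not_faulty (Or.inr rfl)) hiB hjB

end Protocol

theorem dominating_P0_decides_zero_at_first_knowledge_general (n t : ℕ)
    (Q : ProtoDec n) (hQ : IsProtocol t Q) (hC : ConsensusSolves t Q)
    (hdom : Dominates t Q (P0 n t)) :
    ∀ A : Adversary n, Valid t A → ∀ (i : Fin n) (m : ℕ), A.Active i m →
      (DecidesAt Q A i m false ↔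
        (Knows t (existsVal false) A i m ∧ ∀ k < m, ¬ Knows t (existsVal false) A i k)) := by
  intro A hA i m hi
  have decides_of_knows {k} (hk : k ≤ m) (hK : Knows t (existsVal false) A i k) :
      Q A i k = some false :=
    decided_false_of_knows_existsVal_false hQ hC hdom k hA (hi.mono hk) hK
  constructor
  · rintro ⟨hd, hbefore⟩
    refine ⟨knows_existsVal_of_decided hQ hC.2.1 hA hd, fun k hk hK => ?_⟩
    simpa [hbefore k hk] using decides_of_knows hk.le hK
  · rintro ⟨hK, hfirst⟩
    refine ⟨decides_of_knows le_rfl hK, fun k hk => ?_⟩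
    match hd : Q A i k with
    | none => rfl
    | some false => exact absurd (knows_existsVal_of_decided hQ hC.2.1 hA hd) (hfirst k hk)
    | some true => simpa [decides_of_knows le_rfl hK] using hQ.decided_of_le hd hk.le

/-- In any consensus protocol `Q` dominating `P₀`, each (active) process decides 0
exactly at the first time at which `K_i ∃0` holds. -/
theorem dominating_P0_decides_zero_at_first_knowledge (n t : ℕ) (ht : t < n)
    (Q : ProtoDec n) (hQ : IsProtocol t Q) (hC : ConsensusSolves t Q)
    (hdom : Dominates t Q (P0 n t)) :
    ∀ A : Adversary n, Valid t A → ∀ (i : Fin n) (m : ℕ), A.Active i m →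
      (DecidesAt Q A i m false ↔
        (Knows t (existsVal false) A i m ∧ ∀ k < m, ¬ Knows t (existsVal false) A i k)) :=
  dominating_P0_decides_zero_at_first_knowledge_general n t Q hQ hC hdom
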